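/- If f ∈ B satisfies ∇f ∈ ℚ[q][[ε]] and ℒ₋₁f ∈ ℚ[q][[ε]], then f ∈ ℚ[q][[ε]]. If, in addition, there exists a scalar λ with λ·ℒ₀f = f, then f = 0. -/
import Mathlib


/- STATEMENT 19.  On the large phase space B of ℂP¹, with
ℒ₋₁ = Σ(t_{k+1}∂_{k,Q} + s_{k+1}∂_{k,P}) − ∂ and
ℒ₀ = Σ((k+1)tₖ∂_{k,Q} + k·sₖ∂_{k,P} + 2s_{k+1}∂_{k,Q}) − ∂_{1,P} − 2∂_Q:
if ∇f and ℒ₋₁f are constant (i.e. lie in ℚ[q][[ε]]) then f is constant;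
if moreover λ·ℒ₀f = f for some scalar λ, then f = 0. -/

noncomputable section

/-- index set for the variables of the large phase space of ℂP¹:
`none` is the genus parameter `ε`, `some (inl k)` is `sₖ`, `some (inr k)` is `tₖ`. -/
abbrev Idx : Type := Option (ℕ ⊕ ℕ)

/-- `ℚ[q]`. -/
abbrev Base : Type := Polynomial ℚ

/-- the large phase space ring `B = ℚ[q][[ε]][[s₀,s₁,…,t₀,t₁,…]]`, realized as
formal power series over `ℚ[q]` in `ε` and the `sₖ`, `tₖ`. -/
abbrev B : Type := MvPowerSeries Idx Base

/-- coefficient extraction. -/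
def cf (f : B) (m : Idx →₀ ℕ) : Base := f m

/-- build a power series from its coefficients. -/
def mk' (c : (Idx →₀ ℕ) → Base) : B := c

/-- the variable `sₖ`. -/
def sVar (k : ℕ) : B := MvPowerSeries.X (some (Sum.inl k))

/-- the variable `tₖ`. -/
def tVar (k : ℕ) : B := MvPowerSeries.X (some (Sum.inr k))

/-- the genus parameter `ε`. -/
def epsB : B := MvPowerSeries.X none

/-- `∂_{k,P} = ∂/∂sₖ`, coefficientwise. -/
def pdP (k : ℕ) (f : B) : B :=
  mk' fun m => ((m (some (Sum.inl k)) : Base) + 1) *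
    cf f (m + Finsupp.single (some (Sum.inl k)) 1)

/-- `∂_{k,Q} = ∂/∂tₖ`, coefficientwise. -/
def pdQ (k : ℕ) (f : B) : B :=
  mk' fun m => ((m (some (Sum.inr k)) : Base) + 1) *
    cf f (m + Finsupp.single (some (Sum.inr k)) 1)

/-- `∂ = ∂_{0,P}`. -/
def Dop : B → B := pdP 0

/-- `E^c = exp(cε∂) = Σₘ (cε)ᵐ∂ᵐ/m!`, well defined coefficientwise. -/
def Ec (c : ℚ) (f : B) : B :=
  mk' fun m => ∑ j ∈ Finset.range (m none + 1),
    (c ^ j / (j.factorial : ℚ)) • cf (Dop^[j] f) (m - Finsupp.single none j)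

/-- `∇ = ε⁻¹(E^{1/2} − E^{−1/2}) = Σ_{m≥1} (((1/2)ᵐ − (−1/2)ᵐ)/m!) εᵐ⁻¹ ∂ᵐ`,
well defined coefficientwise (the `m = 0` terms cancel, so no negative powers
of `ε` occur). -/
def nab (f : B) : B :=
  mk' fun m => ∑ j ∈ Finset.range (m none + 1),
    (((1/2 : ℚ) ^ (j+1) - (-1/2 : ℚ) ^ (j+1)) / ((j+1).factorial : ℚ)) •
      cf (Dop^[j+1] f) (m - Finsupp.single none j)

/-- `Δ = E^{1/2} + E^{−1/2}`, coefficientwise. -/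
def Delta (f : B) : B :=
  mk' fun m => ∑ j ∈ Finset.range (m none + 1),
    (((1/2 : ℚ) ^ j + (-1/2 : ℚ) ^ j) / (j.factorial : ℚ)) •
      cf (Dop^[j] f) (m - Finsupp.single none j)

variable (F : B)

/-- `⟨⟨τ_{i,Q}⟩⟩` for `i : ℤ`, with the convention `τ_{−1,Q} = 0`. -/
def tauQ (i : ℤ) : B := if 0 ≤ i then pdQ i.toNat F else 0

/-- `⟨⟨τ_{i,P}⟩⟩` for `i : ℤ`, with the convention `τ_{−1,P} = 0`. -/
def tauP (i : ℤ) : B := if 0 ≤ i then pdP i.toNat F else 0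

/-- `v = ∇∂_QF`. -/
def vB : B := nab (pdQ 0 F)

/-- the operator `𝒟 = v∇ + Δ∘∂_Q`. -/
def Dcal (g : B) : B := vB F * nab g + Delta (pdQ 0 g)

/-- `cₖᵐ = m(m+1)⋯(m+k)` (for `k ≥ −1`; the empty product `1` when `k = −1`). -/
def cc (k : ℤ) (m : ℕ) : ℚ := ∏ l ∈ Finset.range (k + 1).toNat, ((m : ℚ) + l)

/-- `dₖᵐ = eₖ(m, m+1, …, m+k)`, the `k`-th elementary symmetric function
(`d₋₁ᵐ = 0`, `d₀ᵐ = 1`). -/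
def dd (k : ℤ) (m : ℕ) : ℚ :=
  ∑ j ∈ Finset.range (k + 1).toNat,
    ∏ l ∈ (Finset.range (k + 1).toNat).erase j, ((m : ℚ) + l)

/-- the quadratic part `Σ_{i+j=k, i,j≥1} i!·j!·(ε²⟨⟨τ_{i−1,Q}τ_{j−1,Q}⟩⟩ +
⟨⟨τ_{i−1,Q}⟩⟩⟨⟨τ_{j−1,Q}⟩⟩)` of the Virasoro constraint. -/
def quad (k : ℤ) : B :=
  ∑ i ∈ Finset.range (k - 1).toNat,
    (((i+1).factorial * ((k - (i+1)).toNat.factorial) : ℚ)) •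
      (epsB ^ 2 * pdQ i (pdQ ((k - (i+2)).toNat) F) + pdQ i F * pdQ ((k - (i+2)).toNat) F)

/-- the Virasoro constraint `z_k`, `k ≥ −1`: the infinite sums
`Σₘ cₖ^{m+1}tₘ⟨⟨τ_{m+k,Q}⟩⟩ + cₖᵐsₘ⟨⟨τ_{m+k,P}⟩⟩ + 2dₖᵐsₘ⟨⟨τ_{m+k−1,Q}⟩⟩` are
well defined coefficientwise; the terms `s̃ₘ = sₘ − δ_{m,1}` contribute
the corrections `−cₖ¹⟨⟨τ_{k+1,P}⟩⟩ − 2dₖ¹⟨⟨τ_{k,Q}⟩⟩`. -/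
def z (k : ℤ) : B :=
  mk' (fun μ => ∑ j ∈ μ.support,
    match j with
    | some (Sum.inr m) => cc k (m+1) • cf (tauQ F ((m : ℤ) + k)) (μ - Finsupp.single j 1)
    | some (Sum.inl m) => cc k m • cf (tauP F ((m : ℤ) + k)) (μ - Finsupp.single j 1)
        + (2 * dd k m) • cf (tauQ F ((m : ℤ) + k - 1)) (μ - Finsupp.single j 1)
    | none => 0)
  - cc k 1 • tauP F (1 + k) - (2 * dd k 1) • tauQ F k
  + quad F k
  + (if k = -1 then sVar 0 * tVar 0 else 0)
  + (if k = 0 then sVar 0 ^ 2 else 0)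

/-- the constraint `y_k = 𝒟⟨⟨τ_{k,Q}⟩⟩ − (k+2)∇⟨⟨τ_{k+1,Q}⟩⟩`. -/
def y (k : ℕ) : B := Dcal F (pdQ k F) - ((k : ℚ) + 2) • nab (pdQ (k+1) F)

/-- the constraint `x_k = 𝒟⟨⟨τ_{k,P}⟩⟩ − (k+1)∇⟨⟨τ_{k+1,P}⟩⟩ − 2∇⟨⟨τ_{k,Q}⟩⟩`. -/
def x (k : ℕ) : B :=
  Dcal F (pdP k F) - ((k : ℚ) + 1) • nab (pdP (k+1) F) - (2 : ℚ) • nab (pdQ k F)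

/-- `ℒ₋₁ = Σ_{k≥0}(t_{k+1}∂_{k,Q} + s_{k+1}∂_{k,P}) − ∂`, coefficientwise. -/
def Lm1 (f : B) : B :=
  mk' (fun μ => ∑ j ∈ μ.support,
    match j with
    | some (Sum.inr m) => if 1 ≤ m then cf (pdQ (m-1) f) (μ - Finsupp.single j 1) else 0
    | some (Sum.inl m) => if 1 ≤ m then cf (pdP (m-1) f) (μ - Finsupp.single j 1) else 0
    | none => 0)
  - pdP 0 f

/-- `ℒ₀ = Σ_{k≥0}((k+1)tₖ∂_{k,Q} + k·sₖ∂_{k,P} + 2s_{k+1}∂_{k,Q}) − ∂_{1,P} − 2∂_Q`,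
coefficientwise. -/
def L0 (f : B) : B :=
  mk' (fun μ => ∑ j ∈ μ.support,
    match j with
    | some (Sum.inr m) => ((m : ℚ) + 1) • cf (pdQ m f) (μ - Finsupp.single j 1)
    | some (Sum.inl m) => (m : ℚ) • cf (pdP m f) (μ - Finsupp.single j 1)
        + (if 1 ≤ m then (2 : ℚ) • cf (pdQ (m-1) f) (μ - Finsupp.single j 1) else 0)
    | none => 0)
  - pdP 1 f - (2 : ℚ) • pdQ 0 f

/-- `f ∈ B` is constant if it lies in `ℚ[q][[ε]]`, i.e. no `sₖ` or `tₖ` occurs. -/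
def IsConst (f : B) : Prop :=
  ∀ μ : Idx →₀ ℕ, ¬ (μ.support ⊆ {none}) → cf f μ = 0

-- ===== auxiliary development =====

abbrev sIdx (k : ℕ) : Idx := some (Sum.inl k)
abbrev tIdx (k : ℕ) : Idx := some (Sum.inr k)

lemma cf_pdP (k : ℕ) (f : B) (ρ : Idx →₀ ℕ) :
    cf (pdP k f) ρ = ((ρ (sIdx k) : Base) + 1) * cf f (ρ + Finsupp.single (sIdx k) 1) := rfl

lemma cf_pdQ (k : ℕ) (f : B) (ρ : Idx →₀ ℕ) :
    cf (pdQ k f) ρ = ((ρ (tIdx k) : Base) + 1) * cf f (ρ + Finsupp.single (tIdx k) 1) := rfl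

lemma nonconst_of {j : Idx} (hj : j ≠ none) {μ : Idx →₀ ℕ} (h : 1 ≤ μ j) :
    ¬ μ.support ⊆ {none} := by
  intro hs
  exact hj (Finset.mem_singleton.mp (hs (Finsupp.mem_support_iff.mpr (by omega))))

/-- iterated `∂` vanishing transfer -/
lemma dop_iter_zero : ∀ (j : ℕ) (h : B) (ν : Idx →₀ ℕ),
    cf h (ν + Finsupp.single (sIdx 0) j) = 0 → cf (Dop^[j] h) ν = 0 := by
  intro j
  induction j with
  | zero => intro h ν hz; simpa using hz
  | succ j IH =>
    intro h ν hz
    rw [Function.iterate_succ_apply]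
    apply IH
    show ((((ν + Finsupp.single (sIdx 0) j) (sIdx 0)) : Base) + 1) * cf h _ = 0
    rw [add_assoc, ← Finsupp.single_add, hz, mul_zero]

lemma step1 (f : B) (h1 : IsConst (nab f)) : IsConst (Dop f) := by
  suffices H : ∀ n, ∀ μ : Idx →₀ ℕ, μ none = n → ¬ μ.support ⊆ {none} → cf (Dop f) μ = 0 by
    intro μ hμ; exact H (μ none) μ rfl hμ
  intro n
  induction n using Nat.strong_induction_on with
  | _ n IH =>
    intro μ hn hμ
    have h0 := h1 μ hμ
    have hnab : cf (nab f) μ = ∑ j ∈ Finset.range (μ none + 1),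
        (((1/2 : ℚ) ^ (j+1) - (-1/2 : ℚ) ^ (j+1)) / ((j+1).factorial : ℚ)) •
          cf (Dop^[j+1] f) (μ - Finsupp.single none j) := rfl
    rw [hnab, Finset.sum_range_succ'] at h0
    have hz : ∀ j ∈ Finset.range (μ none),
        (((1/2 : ℚ) ^ (j+1+1) - (-1/2 : ℚ) ^ (j+1+1)) / ((j+1+1).factorial : ℚ)) •
          cf (Dop^[j+1+1] f) (μ - Finsupp.single none (j+1)) = 0 := by
      intro j hjr
      have hjlt : j + 1 ≤ μ none := by
        have := Finset.mem_range.mp hjr; omega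
      have : cf (Dop^[j+1+1] f) (μ - Finsupp.single none (j+1)) = 0 := by
        rw [Function.iterate_succ_apply]
        apply dop_iter_zero
        apply IH (μ none - (j+1)) (by omega)
        · rw [Finsupp.add_apply, Finsupp.tsub_apply, Finsupp.single_eq_same,
            Finsupp.single_apply, if_neg (by simp)]
          omega
        · apply nonconst_of (j := sIdx 0) (by simp)
          rw [Finsupp.add_apply, Finsupp.single_eq_same]; omega
      rw [this, smul_zero]
    rw [Finset.sum_eq_zero hz, zero_add] at h0
    have he : (((1/2 : ℚ) ^ (0+1) - (-1/2 : ℚ) ^ (0+1)) / ((0+1).factorial : ℚ)) = 1 := by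
      norm_num
    rw [he, one_smul] at h0
    have harg : μ - Finsupp.single none 0 = μ := by
      rw [Finsupp.single_zero, tsub_zero]
    rw [harg, Function.iterate_one] at h0
    exact h0

-- weight and max-index
def idxN : Idx → ℕ
  | none => 0
  | some (Sum.inl m) => m
  | some (Sum.inr m) => m

def Wt (ν : Idx →₀ ℕ) : ℕ := ν.sum fun j c => idxN j * c
def Mx (ν : Idx →₀ ℕ) : ℕ := ν.support.sup idxN

lemma Wt_add (a b : Idx →₀ ℕ) : Wt (a + b) = Wt a + Wt b :=
  Finsupp.sum_add_index' (by simp) (by intro j c d; exact Nat.mul_add _ _ _)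

lemma Wt_single (j : Idx) (n : ℕ) : Wt (Finsupp.single j n) = idxN j * n :=
  Finsupp.sum_single_index (by simp)

lemma Wt_sub_single {μ : Idx →₀ ℕ} {j : Idx} (h : 1 ≤ μ j) :
    Wt (μ - Finsupp.single j 1) + idxN j = Wt μ := by
  have hle : Finsupp.single j 1 ≤ μ := Finsupp.single_le_iff.mpr h
  conv_rhs => rw [← tsub_add_cancel_of_le hle]
  rw [Wt_add, Wt_single, mul_one]

lemma Mx_le_Wt (ν : Idx →₀ ℕ) : Mx ν ≤ Wt ν := by
  apply Finset.sup_le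
  intro j hj
  have h1 : 1 ≤ ν j := Nat.one_le_iff_ne_zero.mpr (Finsupp.mem_support_iff.mp hj)
  calc idxN j ≤ idxN j * ν j := Nat.le_mul_of_pos_right _ h1
    _ ≤ Wt ν := Finset.single_le_sum (f := fun j => idxN j * ν j)
        (fun _ _ => Nat.zero_le _) hj

def termL (f : B) (μ : Idx →₀ ℕ) (j : Idx) : Base :=
  match j with
  | some (Sum.inr m) => if 1 ≤ m then cf (pdQ (m-1) f) (μ - Finsupp.single j 1) else 0
  | some (Sum.inl m) => if 1 ≤ m then cf (pdP (m-1) f) (μ - Finsupp.single j 1) else 0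
  | none => 0

lemma cf_Lm1 (f : B) (μ : Idx →₀ ℕ) :
    cf (Lm1 f) μ = (∑ j ∈ μ.support, termL f μ j) - cf (pdP 0 f) μ := rfl

lemma killOther (f : B) {W m : ℕ}
    (IH : ∀ ν' : Idx →₀ ℕ, Wt ν' - Mx ν' < W - m → ¬ ν'.support ⊆ {none} → cf f ν' = 0)
    {μ : Idx →₀ ℕ} {jstar : Idx}
    (hW : Wt μ = W + 1) (hjs : 1 ≤ μ jstar) (hidx : idxN jstar = m + 1) :
    ∀ j ∈ μ.support.erase jstar, termL f μ j = 0 := by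
  intro j hj
  obtain ⟨hjne, hjs'⟩ := Finset.mem_erase.mp hj
  have hμj : 1 ≤ μ j := Nat.one_le_iff_ne_zero.mpr (Finsupp.mem_support_iff.mp hjs')
  have hjsnone : jstar ≠ none := by
    intro hh; rw [hh] at hidx; simp [idxN] at hidx
  have key : ∀ (p : ℕ) (jp : Idx), idxN j = p + 1 → idxN jp = p →
      cf f ((μ - Finsupp.single j 1) + Finsupp.single jp 1) = 0 := by
    intro p jp hip hjp
    set ν' : Idx →₀ ℕ := (μ - Finsupp.single j 1) + Finsupp.single jp 1 with hν'
    have hWsub := Wt_sub_single hμj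
    have hWν' : Wt ν' = W := by
      rw [hν', Wt_add, Wt_single, hjp, mul_one]; omega
    have hstar : 1 ≤ ν' jstar := by
      rw [hν', Finsupp.add_apply, Finsupp.tsub_apply, Finsupp.single_apply,
        if_neg (fun hh => hjne hh)]
      have h0 : (0 : ℕ) ≤ Finsupp.single jp 1 jstar := Nat.zero_le _
      omega
    have hMx : m + 1 ≤ Mx ν' := by
      rw [← hidx]
      exact Finset.le_sup (Finsupp.mem_support_iff.mpr (by omega))
    have hle := Mx_le_Wt ν'
    exact IH _ (by omega) (nonconst_of hjsnone hstar)
  rcases j with _ | mm | mm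
  · rfl
  · rcases mm with _ | p
    · simp [termL]
    · show (if 1 ≤ p+1 then cf (pdP (p+1-1) f) (μ - Finsupp.single (sIdx (p+1)) 1) else 0) = 0
      rw [if_pos (by omega)]
      have hp : p + 1 - 1 = p := rfl
      rw [hp, cf_pdP, key p (sIdx p) rfl rfl, mul_zero]
  · rcases mm with _ | p
    · simp [termL]
    · show (if 1 ≤ p+1 then cf (pdQ (p+1-1) f) (μ - Finsupp.single (tIdx (p+1)) 1) else 0) = 0
      rw [if_pos (by omega)]
      have hp : p + 1 - 1 = p := rfl
      rw [hp, cf_pdQ, key p (tIdx p) rfl rfl, mul_zero]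

lemma isConst_of (f : B) (h1 : IsConst (nab f)) (h2 : IsConst (Lm1 f)) : IsConst f := by
  have hg : IsConst (Dop f) := step1 f h1
  have S0 : ∀ μ : Idx →₀ ℕ, ¬ μ.support ⊆ {none} → ∑ j ∈ μ.support, termL f μ j = 0 := by
    intro μ hμ
    have h0 := h2 μ hμ
    have hgg : cf (pdP 0 f) μ = 0 := hg μ hμ
    rw [cf_Lm1, hgg, sub_zero] at h0
    exact h0
  suffices H : ∀ k (ν : Idx →₀ ℕ), Wt ν - Mx ν = k → ¬ ν.support ⊆ {none} → cf f ν = 0 by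
    intro ν hν; exact H _ ν rfl hν
  intro k
  induction k using Nat.strong_induction_on with
  | _ k IHk =>
  intro ν hk hν
  have IH : ∀ ν' : Idx →₀ ℕ, Wt ν' - Mx ν' < Wt ν - Mx ν → ¬ ν'.support ⊆ {none} →
      cf f ν' = 0 := fun ν' h => IHk _ (by omega) ν' rfl
  obtain ⟨j0, hj0s, hj0⟩ : ∃ j ∈ ν.support, j ≠ none := by
    by_contra hcon; push_neg at hcon
    exact hν fun j hj => Finset.mem_singleton.mpr (hcon j hj)
  obtain ⟨jm, hjms, hjm_ne, hjm_idx⟩ : ∃ jm ∈ ν.support, jm ≠ none ∧ idxN jm = Mx ν := by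
    rcases Nat.eq_zero_or_pos (Mx ν) with hM | hM
    · refine ⟨j0, hj0s, hj0, ?_⟩
      have hle : idxN j0 ≤ Mx ν := Finset.le_sup (f := idxN) hj0s
      omega
    · obtain ⟨b, hb, hbe⟩ := Finset.exists_mem_eq_sup ν.support ⟨j0, hj0s⟩ idxN
      refine ⟨b, hb, ?_, hbe.symm⟩
      intro hh
      rw [hh] at hbe
      have : Mx ν = idxN (none : Idx) := hbe
      simp [idxN] at this
      omega
  have hνjm : 1 ≤ ν jm := Nat.one_le_iff_ne_zero.mpr (Finsupp.mem_support_iff.mp hjms)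
  have hWsub := Wt_sub_single hνjm
  -- generic finishing move, parameterized over the two symmetric cases
  rcases jm with _ | mm | mm
  · exact absurd rfl hjm_ne
  -- case jm = sIdx mm
  · have hMxmm : Mx ν = mm := hjm_idx.symm
    subst hMxmm
    set μ : Idx →₀ ℕ := (ν - Finsupp.single (sIdx (Mx ν)) 1) + Finsupp.single (sIdx (Mx ν + 1)) 1 with hμdef
    have hWμ : Wt μ = Wt ν + 1 := by
      have e1 : Wt μ = Wt (ν - Finsupp.single (sIdx (Mx ν)) 1) + (Mx ν + 1) := by
        rw [hμdef, Wt_add, Wt_single]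
        have hi : idxN (sIdx (Mx ν + 1)) = Mx ν + 1 := rfl
        rw [hi, mul_one]
      have e2 : Wt (ν - Finsupp.single (sIdx (Mx ν)) 1) + Mx ν = Wt ν := by
        have hi : idxN (sIdx (Mx ν)) = Mx ν := rfl
        rw [← hi]; exact hWsub
      omega
    have hμst : 1 ≤ μ (sIdx (Mx ν + 1)) := by
      rw [hμdef, Finsupp.add_apply, Finsupp.single_eq_same]; omega
    have hmem : sIdx (Mx ν + 1) ∈ μ.support :=
      Finsupp.mem_support_iff.mpr (Nat.one_le_iff_ne_zero.mp hμst)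
    have hsum := S0 μ (nonconst_of (by simp) hμst)
    rw [← Finset.add_sum_erase _ _ hmem] at hsum
    rw [Finset.sum_eq_zero (killOther f (W := Wt ν) (m := Mx ν) IH hWμ hμst rfl),
      add_zero] at hsum
    have hterm : termL f μ (sIdx (Mx ν + 1)) = ((ν (sIdx (Mx ν)) : Base)) * cf f ν := by
      show (if 1 ≤ Mx ν + 1 then cf (pdP (Mx ν + 1 - 1) f) (μ - Finsupp.single (sIdx (Mx ν + 1)) 1) else 0) = _
      rw [if_pos (by omega)]
      have hback : μ - Finsupp.single (sIdx (Mx ν + 1)) 1 = ν - Finsupp.single (sIdx (Mx ν)) 1 := by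
        rw [hμdef]; exact add_tsub_cancel_right _ _
      have hres : (ν - Finsupp.single (sIdx (Mx ν)) 1) + Finsupp.single (sIdx (Mx ν)) 1 = ν :=
        tsub_add_cancel_of_le (Finsupp.single_le_iff.mpr hνjm)
      have hp : Mx ν + 1 - 1 = Mx ν := rfl
      rw [hp, cf_pdP, hback, hres, Finsupp.tsub_apply, Finsupp.single_eq_same]
      congr 1
      rw [Nat.cast_sub hνjm, Nat.cast_one]
      ring
    rw [hterm] at hsum
    rcases mul_eq_zero.mp hsum with hc | hc
    · exact absurd hc (Nat.cast_ne_zero.mpr (Nat.one_le_iff_ne_zero.mp hνjm))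
    · exact hc
  -- case jm = tIdx mm
  · have hMxmm : Mx ν = mm := hjm_idx.symm
    subst hMxmm
    set μ : Idx →₀ ℕ := (ν - Finsupp.single (tIdx (Mx ν)) 1) + Finsupp.single (tIdx (Mx ν + 1)) 1 with hμdef
    have hWμ : Wt μ = Wt ν + 1 := by
      have e1 : Wt μ = Wt (ν - Finsupp.single (tIdx (Mx ν)) 1) + (Mx ν + 1) := by
        rw [hμdef, Wt_add, Wt_single]
        have hi : idxN (tIdx (Mx ν + 1)) = Mx ν + 1 := rfl
        rw [hi, mul_one]
      have e2 : Wt (ν - Finsupp.single (tIdx (Mx ν)) 1) + Mx ν = Wt ν := by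
        have hi : idxN (tIdx (Mx ν)) = Mx ν := rfl
        rw [← hi]; exact hWsub
      omega
    have hμst : 1 ≤ μ (tIdx (Mx ν + 1)) := by
      rw [hμdef, Finsupp.add_apply, Finsupp.single_eq_same]; omega
    have hmem : tIdx (Mx ν + 1) ∈ μ.support :=
      Finsupp.mem_support_iff.mpr (Nat.one_le_iff_ne_zero.mp hμst)
    have hsum := S0 μ (nonconst_of (by simp) hμst)
    rw [← Finset.add_sum_erase _ _ hmem] at hsum
    rw [Finset.sum_eq_zero (killOther f (W := Wt ν) (m := Mx ν) IH hWμ hμst rfl),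
      add_zero] at hsum
    have hterm : termL f μ (tIdx (Mx ν + 1)) = ((ν (tIdx (Mx ν)) : Base)) * cf f ν := by
      show (if 1 ≤ Mx ν + 1 then cf (pdQ (Mx ν + 1 - 1) f) (μ - Finsupp.single (tIdx (Mx ν + 1)) 1) else 0) = _
      rw [if_pos (by omega)]
      have hback : μ - Finsupp.single (tIdx (Mx ν + 1)) 1 = ν - Finsupp.single (tIdx (Mx ν)) 1 := by
        rw [hμdef]; exact add_tsub_cancel_right _ _
      have hres : (ν - Finsupp.single (tIdx (Mx ν)) 1) + Finsupp.single (tIdx (Mx ν)) 1 = ν :=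
        tsub_add_cancel_of_le (Finsupp.single_le_iff.mpr hνjm)
      have hp : Mx ν + 1 - 1 = Mx ν := rfl
      rw [hp, cf_pdQ, hback, hres, Finsupp.tsub_apply, Finsupp.single_eq_same]
      congr 1
      rw [Nat.cast_sub hνjm, Nat.cast_one]
      ring
    rw [hterm] at hsum
    rcases mul_eq_zero.mp hsum with hc | hc
    · exact absurd hc (Nat.cast_ne_zero.mpr (Nat.one_le_iff_ne_zero.mp hνjm))
    · exact hc

def termL0 (f : B) (μ : Idx →₀ ℕ) (j : Idx) : Base :=
  match j with
  | some (Sum.inr m) => ((m : ℚ) + 1) • cf (pdQ m f) (μ - Finsupp.single j 1)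
  | some (Sum.inl m) => (m : ℚ) • cf (pdP m f) (μ - Finsupp.single j 1)
      + (if 1 ≤ m then (2 : ℚ) • cf (pdQ (m-1) f) (μ - Finsupp.single j 1) else 0)
  | none => 0

lemma cf_L0 (f : B) (μ : Idx →₀ ℕ) :
    cf (L0 f) μ = (∑ j ∈ μ.support, termL0 f μ j) - cf (pdP 1 f) μ
      - (2 : ℚ) • cf (pdQ 0 f) μ := rfl

lemma L0_eq_zero (f : B) (hf : IsConst f) : L0 f = 0 := by
  have hP : ∀ (k : ℕ) (ρ : Idx →₀ ℕ), cf (pdP k f) ρ = 0 := by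
    intro k ρ
    have hx : 1 ≤ ((ρ + Finsupp.single (sIdx k) 1 : Idx →₀ ℕ)) (sIdx k) := by
      rw [Finsupp.add_apply, Finsupp.single_eq_same]; omega
    rw [cf_pdP, hf _ (nonconst_of (by simp) hx), mul_zero]
  have hQ : ∀ (k : ℕ) (ρ : Idx →₀ ℕ), cf (pdQ k f) ρ = 0 := by
    intro k ρ
    have hx : 1 ≤ ((ρ + Finsupp.single (tIdx k) 1 : Idx →₀ ℕ)) (tIdx k) := by
      rw [Finsupp.add_apply, Finsupp.single_eq_same]; omega
    rw [cf_pdQ, hf _ (nonconst_of (by simp) hx), mul_zero]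
  have : ∀ μ : Idx →₀ ℕ, cf (L0 f) μ = cf (0 : B) μ := by
    intro μ
    rw [cf_L0]
    have hterm : ∀ j ∈ μ.support, termL0 f μ j = 0 := by
      intro j hj
      rcases j with _ | mm | mm
      · rfl
      · show (mm : ℚ) • cf (pdP mm f) _ + (if 1 ≤ mm then (2:ℚ) • cf (pdQ (mm-1) f) _ else 0) = 0
        rw [hP, smul_zero, zero_add]
        split
        · rw [hQ, smul_zero]
        · rfl
      · show ((mm : ℚ) + 1) • cf (pdQ mm f) _ = 0
        rw [hQ, smul_zero]
      -- done
    rw [Finset.sum_eq_zero hterm, hP, hQ, smul_zero, sub_zero, sub_zero]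
    rfl
  exact funext this

theorem cp1_string_dilaton_rigidity (f : B)
    (h1 : IsConst (nab f)) (h2 : IsConst (Lm1 f)) :
    IsConst f ∧ ((∃ lam : B, IsConst lam ∧ lam * L0 f = f) → f = 0) := by
  have hf : IsConst f := isConst_of f h1 h2
  refine ⟨hf, ?_⟩
  rintro ⟨lam, -, hlam⟩
  rw [← hlam, L0_eq_zero f hf, mul_zero]

end
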